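/- arXiv:2106.05241 — 4 statements merged into one kernel-verified Lean document; each statement's English description precedes it below -/
import Mathlib

section
/- Under the stated setup, for every probability mass function q on C, the objective satisfies the identity F(q) = Σ_{c∈C} q c · (log(q c) − log(π c)) − log Z*, i.e. the expected KL divergence E_{z∼μ} KL[q ∥ p(·∣z)] equals KL[q ∥ π] − log Z*. -/
/-! The expected KL divergence is affine in `log p(·|z)`, so integrating over `z` replaces
`log p(c|z)` by its mean `∫ log p(c|z) dμ = log π c + log Z*`; since `q` sums to one, the
`log Z*` terms add up to exactly `log Z*`. -/

open MeasureTheory Real BigOperators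

theorem Real.log_exp_div_sum_exp {ι : Type*} [Fintype ι] [Nonempty ι] (f : ι → ℝ) (i : ι) :
    log (exp (f i) / ∑ j, exp (f j)) = f i - log (∑ j, exp (f j)) := by
  have hpos : 0 < ∑ j, exp (f j) := Finset.sum_pos (fun j _ => exp_pos _) Finset.univ_nonempty
  rw [log_div (exp_ne_zero _) hpos.ne', log_exp]

theorem MeasureTheory.integral_sum_mul_const_sub {Z ι : Type*} [MeasurableSpace Z] (μ : Measure Z)
    [IsProbabilityMeasure μ] [Fintype ι] (w a : ι → ℝ) (g : Z → ι → ℝ)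
    (hg : ∀ i, Integrable (fun z => g z i) μ) :
    ∫ z, ∑ i, w i * (a i - g z i) ∂μ = ∑ i, w i * (a i - ∫ z, g z i ∂μ) := by
  have hterm : ∀ i, Integrable (fun z => w i * (a i - g z i)) μ := fun i =>
    ((integrable_const (a i)).sub (hg i)).const_mul (w i)
  rw [integral_finsetSum _ fun i _ => hterm i]
  congr 1 with i
  rw [integral_const_mul, integral_sub (integrable_const _) (hg i), integral_const]
  simp

theorem Finset.sum_mul_sub_sub_const_of_sum_eq_one {ι R : Type*} [Fintype ι] [CommRing R]
    {w : ι → R} (hw : ∑ i, w i = 1) (a b : ι → R) (L : R) :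
    ∑ i, w i * (b i - (a i - L)) = ∑ i, w i * (b i - a i) + L := by
  calc ∑ i, w i * (b i - (a i - L)) = ∑ i, (w i * (b i - a i) + w i * L) := by
        congr 1 with i; ring
    _ = ∑ i, w i * (b i - a i) + L := by rw [sum_add_distrib, ← sum_mul, hw, one_mul]

theorem vade_objective_identity_general
    {Z : Type*} [MeasurableSpace Z] (μ : Measure Z) [IsProbabilityMeasure μ]
    {C : Type*} [Fintype C] [Nonempty C]
    (p : Z → C → ℝ)
    (hint : ∀ c, Integrable (fun z => Real.log (p z c)) μ)
    (Zstar : ℝ) (hZstar : Zstar = ∑ c, Real.exp (∫ z, Real.log (p z c) ∂μ))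
    (smx : C → ℝ) (hsmx : ∀ c, smx c = Real.exp (∫ z, Real.log (p z c) ∂μ) / Zstar)
    (q : C → ℝ) (hq1 : ∑ c, q c = 1) :
    ∫ z, ∑ c, q c * (Real.log (q c) - Real.log (p z c)) ∂μ
      = (∑ c, q c * (Real.log (q c) - Real.log (smx c))) - Real.log Zstar := by
  have hlog_smx : ∀ c, log (smx c) = (∫ z, log (p z c) ∂μ) - log Zstar := fun c => by
    rw [hsmx c, hZstar]
    exact log_exp_div_sum_exp (fun c => ∫ z, log (p z c) ∂μ) c
  simp_rw [hlog_smx, Finset.sum_mul_sub_sub_const_of_sum_eq_one hq1, add_sub_cancel_right]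
  exact integral_sum_mul_const_sub μ q (fun c => log (q c)) (fun z c => log (p z c)) hint

/-- Identity `F(q) = KL[q ‖ smx] − log Z*` for the single-facet VaDE objective. -/
theorem vade_objective_identity
    {Z : Type*} [MeasurableSpace Z] (μ : Measure Z) [IsProbabilityMeasure μ]
    {C : Type*} [Fintype C] [Nonempty C]
    (p : Z → C → ℝ)
    (hpos : ∀ z c, 0 < p z c)
    (hsum : ∀ z, ∑ c, p z c = 1)
    (hmeas : ∀ c, Measurable fun z => Real.log (p z c))
    (hint : ∀ c, Integrable (fun z => Real.log (p z c)) μ)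
    (Zstar : ℝ) (hZstar : Zstar = ∑ c, Real.exp (∫ z, Real.log (p z c) ∂μ))
    (smx : C → ℝ) (hsmx : ∀ c, smx c = Real.exp (∫ z, Real.log (p z c) ∂μ) / Zstar)
    (q : C → ℝ) (hq0 : ∀ c, 0 ≤ q c) (hq1 : ∑ c, q c = 1) :
    ∫ z, ∑ c, q c * (Real.log (q c) - Real.log (p z c)) ∂μ
      = (∑ c, q c * (Real.log (q c) - Real.log (smx c))) - Real.log Zstar :=
  vade_objective_identity_general μ p hint Zstar hZstar smx hsmx q hq1
end

section
/- (Single-Facet VaDE Trick.) Under the stated setup, π is a probability mass function on C, F(π) = −log Z*, and for every probability mass function q on C one has F(q) ≥ −log Z*, with equality if and only if q = π. In other words, π is the unique minimizer over pmfs q on C of the expected KL divergence E_{z∼μ} KL[q ∥ p(·∣z)], and the minimum value attained is −log Z*. -/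
/-!
Put `a c := ∫ log p(z, c) dμ`, so that `π` is the softmax of `a` and `log π c = a c - log Z*`.
By linearity of the integral, `F(q) = ∑ q c (log q c - a c) = KL(q ∥ π) - log Z*`, and Gibbs'
inequality `KL(q ∥ π) ≥ 0`, with equality only at `q = π`, finishes the proof.
-/

open MeasureTheory Real BigOperators InformationTheory

section Gibbs

variable {C : Type*} [Fintype C]

lemma mul_log_sub_log_eq_mul_klFun_div_add {q r : ℝ} (hq : 0 ≤ q) (hr : 0 < r) :
    q * (log q - log r) = r * klFun (q / r) + (q - r) := by
  rcases hq.eq_or_lt with rfl | hq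
  · simp [klFun]
  · rw [klFun, log_div hq.ne' hr.ne']
    field_simp
    ring

lemma sum_mul_log_sub_log_eq_sum_klFun {q r : C → ℝ} (hq : ∀ c, 0 ≤ q c) (hr : ∀ c, 0 < r c)
    (hqr : ∑ c, q c = ∑ c, r c) :
    ∑ c, q c * (log (q c) - log (r c)) = ∑ c, r c * klFun (q c / r c) := by
  simp only [fun c ↦ mul_log_sub_log_eq_mul_klFun_div_add (hq c) (hr c), Finset.sum_add_distrib,
    Finset.sum_sub_distrib, hqr, sub_self, add_zero]

theorem sum_mul_log_sub_log_nonneg {q r : C → ℝ} (hq : ∀ c, 0 ≤ q c) (hr : ∀ c, 0 < r c)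
    (hqr : ∑ c, q c = ∑ c, r c) :
    0 ≤ ∑ c, q c * (log (q c) - log (r c)) := by
  rw [sum_mul_log_sub_log_eq_sum_klFun hq hr hqr]
  exact Finset.sum_nonneg fun c _ ↦
    mul_nonneg (hr c).le (klFun_nonneg (div_nonneg (hq c) (hr c).le))

theorem sum_mul_log_sub_log_eq_zero_iff {q r : C → ℝ} (hq : ∀ c, 0 ≤ q c) (hr : ∀ c, 0 < r c)
    (hqr : ∑ c, q c = ∑ c, r c) :
    ∑ c, q c * (log (q c) - log (r c)) = 0 ↔ q = r := by
  have hdiv : ∀ c, 0 ≤ q c / r c := fun c ↦ div_nonneg (hq c) (hr c).le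
  rw [sum_mul_log_sub_log_eq_sum_klFun hq hr hqr,
    Finset.sum_eq_zero_iff_of_nonneg fun c _ ↦ mul_nonneg (hr c).le (klFun_nonneg (hdiv c)),
    funext_iff]
  refine forall_congr' fun c ↦ ?_
  rw [mul_eq_zero_iff_left (hr c).ne', klFun_eq_zero_iff (hdiv c), div_eq_one_iff_eq (hr c).ne']
  simp

end Gibbs

section Softmax

variable {C : Type*} [Fintype C] (a : C → ℝ)

noncomputable def softmax (c : C) : ℝ := exp (a c) / ∑ c', exp (a c')

variable [Nonempty C]

lemma sum_exp_pos : 0 < ∑ c, exp (a c) :=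
  Finset.sum_pos (fun c _ ↦ exp_pos (a c)) Finset.univ_nonempty

lemma softmax_pos (c : C) : 0 < softmax a c :=
  div_pos (exp_pos _) (sum_exp_pos a)

lemma sum_softmax : ∑ c, softmax a c = 1 := by
  simp only [softmax, ← Finset.sum_div, div_self (sum_exp_pos a).ne']

lemma log_softmax (c : C) : log (softmax a c) = a c - log (∑ c, exp (a c)) := by
  rw [softmax, log_div (exp_pos _).ne' (sum_exp_pos a).ne', log_exp]

lemma sum_mul_log_sub_eq_sum_mul_log_sub_log_softmax {q : C → ℝ} (hq : ∑ c, q c = 1) :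
    ∑ c, q c * (log (q c) - a c)
      = ∑ c, q c * (log (q c) - log (softmax a c)) - log (∑ c, exp (a c)) := by
  simp only [log_softmax, sub_sub_eq_add_sub, mul_sub, mul_add, Finset.sum_sub_distrib,
    Finset.sum_add_distrib, ← Finset.sum_mul, hq, one_mul]
  ring

theorem neg_log_sum_exp_le_sum_mul_log_sub {q : C → ℝ} (hq : ∀ c, 0 ≤ q c) (hq1 : ∑ c, q c = 1) :
    -log (∑ c, exp (a c)) ≤ ∑ c, q c * (log (q c) - a c) := by
  rw [sum_mul_log_sub_eq_sum_mul_log_sub_log_softmax a hq1, le_sub_iff_add_le, neg_add_cancel]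
  exact sum_mul_log_sub_log_nonneg hq (softmax_pos a) (by rw [hq1, sum_softmax])

theorem sum_mul_log_sub_eq_neg_log_sum_exp_iff {q : C → ℝ} (hq : ∀ c, 0 ≤ q c)
    (hq1 : ∑ c, q c = 1) :
    ∑ c, q c * (log (q c) - a c) = -log (∑ c, exp (a c)) ↔ q = softmax a := by
  rw [sum_mul_log_sub_eq_sum_mul_log_sub_log_softmax a hq1, sub_eq_neg_self]
  exact sum_mul_log_sub_log_eq_zero_iff hq (softmax_pos a) (by rw [hq1, sum_softmax])

end Softmax

lemma integral_sum_mul_sub {Z C : Type*} [MeasurableSpace Z] {μ : Measure Z}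
    [IsProbabilityMeasure μ] [Fintype C] {f : Z → C → ℝ} (hf : ∀ c, Integrable (f · c) μ)
    (q g : C → ℝ) :
    ∫ z, ∑ c, q c * (g c - f z c) ∂μ = ∑ c, q c * (g c - ∫ z, f z c ∂μ) := by
  rw [integral_finsetSum (f := fun c z ↦ q c * (g c - f z c)) _
    fun c _ ↦ ((integrable_const _).sub (hf c)).const_mul _]
  refine Finset.sum_congr rfl fun c _ ↦ ?_
  rw [integral_const_mul, integral_sub (integrable_const _) (hf c), integral_const]
  simp

theorem single_facet_vade_trick_general
    {Z : Type*} [MeasurableSpace Z] (μ : Measure Z) [IsProbabilityMeasure μ]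
    {C : Type*} [Fintype C] [Nonempty C]
    (p : Z → C → ℝ)
    (hint : ∀ c, Integrable (fun z => Real.log (p z c)) μ)
    (Zstar : ℝ) (hZstar : Zstar = ∑ c, Real.exp (∫ z, Real.log (p z c) ∂μ))
    (smx : C → ℝ) (hsmx : ∀ c, smx c = Real.exp (∫ z, Real.log (p z c) ∂μ) / Zstar) :
    ((∀ c, 0 ≤ smx c) ∧ ∑ c, smx c = 1)
    ∧ (∫ z, ∑ c, smx c * (Real.log (smx c) - Real.log (p z c)) ∂μ = - Real.log Zstar)
    ∧ (∀ q : C → ℝ, (∀ c, 0 ≤ q c) → ∑ c, q c = 1 →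
        (- Real.log Zstar ≤ ∫ z, ∑ c, q c * (Real.log (q c) - Real.log (p z c)) ∂μ)
        ∧ ((∫ z, ∑ c, q c * (Real.log (q c) - Real.log (p z c)) ∂μ = - Real.log Zstar)
            ↔ q = smx)) := by
  subst hZstar
  obtain rfl : smx = softmax (fun c ↦ ∫ z, log (p z c) ∂μ) := funext hsmx
  simp only [integral_sum_mul_sub hint]
  have hsmx_nonneg := fun c ↦ (softmax_pos (fun c ↦ ∫ z, log (p z c) ∂μ) c).le
  refine ⟨⟨hsmx_nonneg, sum_softmax _⟩, ?_, fun q hq hq1 ↦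
    ⟨neg_log_sum_exp_le_sum_mul_log_sub _ hq hq1, sum_mul_log_sub_eq_neg_log_sum_exp_iff _ hq hq1⟩⟩
  exact (sum_mul_log_sub_eq_neg_log_sum_exp_iff _ hsmx_nonneg (sum_softmax _)).mpr rfl

/-- Single-Facet VaDE Trick: `smx` is a pmf, `F(smx) = −log Z*`, and `smx` is the unique
minimizer of the expected KL divergence `F` over pmfs on `C`, with minimum `−log Z*`. -/
theorem single_facet_vade_trick
    {Z : Type*} [MeasurableSpace Z] (μ : Measure Z) [IsProbabilityMeasure μ]
    {C : Type*} [Fintype C] [Nonempty C]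
    (p : Z → C → ℝ)
    (hpos : ∀ z c, 0 < p z c)
    (hsum : ∀ z, ∑ c, p z c = 1)
    (hmeas : ∀ c, Measurable fun z => Real.log (p z c))
    (hint : ∀ c, Integrable (fun z => Real.log (p z c)) μ)
    (Zstar : ℝ) (hZstar : Zstar = ∑ c, Real.exp (∫ z, Real.log (p z c) ∂μ))
    (smx : C → ℝ) (hsmx : ∀ c, smx c = Real.exp (∫ z, Real.log (p z c) ∂μ) / Zstar) :
    ((∀ c, 0 ≤ smx c) ∧ ∑ c, smx c = 1)
    ∧ (∫ z, ∑ c, smx c * (Real.log (smx c) - Real.log (p z c)) ∂μ = - Real.log Zstar)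
    ∧ (∀ q : C → ℝ, (∀ c, 0 ≤ q c) → ∑ c, q c = 1 →
        (- Real.log Zstar ≤ ∫ z, ∑ c, q c * (Real.log (q c) - Real.log (p z c)) ∂μ)
        ∧ ((∫ z, ∑ c, q c * (Real.log (q c) - Real.log (p z c)) ∂μ = - Real.log Zstar)
            ↔ q = smx)) :=
  single_facet_vade_trick_general μ p hint Zstar hZstar smx hsmx
end

section
/- Under the stated setup, Z* ≤ 1; consequently the minimum value −log Z* of the objective F over probability mass functions on C is nonnegative. (This corrects the claim of VaDE that the expected KL term can in general be made equal to zero.) -/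
open MeasureTheory Real

/-! By Jensen's inequality for `exp`, the geometric mean `exp (∫ log p(c|z) dμ)` of each class
probability is at most its arithmetic mean `∫ p(c|z) dμ`. Summing over `c` and using
`∑ c, p(c|z) = 1` gives `Z* ≤ 1`, hence `-log Z* ≥ 0`. -/

section

variable {Z : Type*} [MeasurableSpace Z] {μ : Measure Z}

theorem exp_integral_le_integral_exp [IsProbabilityMeasure μ] {f : Z → ℝ}
    (hf : Integrable f μ) (hexp : Integrable (fun z => exp (f z)) μ) :
    exp (∫ z, f z ∂μ) ≤ ∫ z, exp (f z) ∂μ :=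
  convexOn_exp.map_integral_le continuous_exp.continuousOn isClosed_univ
    (.of_forall fun _ => Set.mem_univ _) hf hexp

theorem exp_integral_log_le_integral [IsProbabilityMeasure μ] {g : Z → ℝ} (hg : ∀ z, 0 < g z)
    (hlog : Integrable (fun z => log (g z)) μ) (hint : Integrable g μ) :
    exp (∫ z, log (g z) ∂μ) ≤ ∫ z, g z ∂μ := by
  simpa only [exp_log (hg _)] using
    exp_integral_le_integral_exp hlog (by simpa only [exp_log (hg _)] using hint)

theorem integrable_of_integrable_log_of_le [IsFiniteMeasure μ] {g : Z → ℝ} {M : ℝ}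
    (hg : ∀ z, 0 < g z) (hle : ∀ z, g z ≤ M) (hlog : Integrable (fun z => log (g z)) μ) :
    Integrable g μ := by
  have hmeas : AEStronglyMeasurable g μ := by
    simpa only [Function.comp_def, exp_log (hg _)] using
      continuous_exp.comp_aestronglyMeasurable hlog.aestronglyMeasurable
  refine .of_bound hmeas M (.of_forall fun z => ?_)
  rw [norm_of_nonneg (hg z).le]
  exact hle z

theorem sum_exp_integral_log_le_one [IsProbabilityMeasure μ] {ι : Type*} [Fintype ι]
    {p : Z → ι → ℝ} (hpos : ∀ z c, 0 < p z c) (hsum : ∀ z, ∑ c, p z c ≤ 1)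
    (hlog : ∀ c, Integrable (fun z => log (p z c)) μ) :
    ∑ c, exp (∫ z, log (p z c) ∂μ) ≤ 1 := by
  have hle_one (z : Z) (c : ι) : p z c ≤ 1 :=
    (Finset.single_le_sum (fun i _ => (hpos z i).le) (Finset.mem_univ c)).trans (hsum z)
  have hint (c : ι) : Integrable (fun z => p z c) μ :=
    integrable_of_integrable_log_of_le (hpos · c) (hle_one · c) (hlog c)
  calc ∑ c, exp (∫ z, log (p z c) ∂μ)
      ≤ ∑ c, ∫ z, p z c ∂μ :=
        Finset.sum_le_sum fun c _ => exp_integral_log_le_integral (hpos · c) (hlog c) (hint c)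
    _ = ∫ z, ∑ c, p z c ∂μ := (integral_finsetSum _ fun c _ => hint c).symm
    _ ≤ ∫ _, (1 : ℝ) ∂μ :=
        integral_mono (integrable_finsetSum _ fun c _ => hint c) (integrable_const 1) hsum
    _ = 1 := by simp

end

theorem vade_normalizer_le_one_general
    {Z : Type*} [MeasurableSpace Z] (μ : Measure Z) [IsProbabilityMeasure μ]
    {C : Type*} [Fintype C]
    (p : Z → C → ℝ)
    (hpos : ∀ z c, 0 < p z c)
    (hsum : ∀ z, ∑ c, p z c = 1)
    (hint : ∀ c, Integrable (fun z => Real.log (p z c)) μ)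
    (Zstar : ℝ) (hZstar : Zstar = ∑ c, Real.exp (∫ z, Real.log (p z c) ∂μ)) :
    Zstar ≤ 1 ∧ 0 ≤ - Real.log Zstar := by
  have hZle : Zstar ≤ 1 :=
    hZstar ▸ sum_exp_integral_log_le_one hpos (fun z => (hsum z).le) hint
  have hZnonneg : 0 ≤ Zstar := hZstar ▸ Finset.sum_nonneg fun c _ => (exp_pos _).le
  exact ⟨hZle, neg_nonneg.mpr (log_nonpos hZnonneg hZle)⟩

/-- `Z* ≤ 1`, hence the minimum value `−log Z*` of the objective is nonnegative. -/
theorem vade_normalizer_le_one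
    {Z : Type*} [MeasurableSpace Z] (μ : Measure Z) [IsProbabilityMeasure μ]
    {C : Type*} [Fintype C] [Nonempty C]
    (p : Z → C → ℝ)
    (hpos : ∀ z c, 0 < p z c)
    (hsum : ∀ z, ∑ c, p z c = 1)
    (hmeas : ∀ c, Measurable fun z => Real.log (p z c))
    (hint : ∀ c, Integrable (fun z => Real.log (p z c)) μ)
    (Zstar : ℝ) (hZstar : Zstar = ∑ c, Real.exp (∫ z, Real.log (p z c) ∂μ)) :
    Zstar ≤ 1 ∧ 0 ≤ - Real.log Zstar :=
  vade_normalizer_le_one_general μ p hpos hsum hint Zstar hZstar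
end

section
/- (Correction of VaDE's misapprehension.) Under the stated setup, define q0 : C → ℝ by q0 c := ∫ p z c ∂μ(z). Then q0 is a probability mass function on C, the objective satisfies F(q0) = Σ_{c∈C} q0 c · (log(q0 c) − ∫ log(p z c) ∂μ(z)), and F(q0) ≥ 0, with F(q0) = 0 if and only if for every c ∈ C the function z ↦ p z c is μ-almost everywhere constant. Hence the choice q0(c) = E_{z∼μ}[p(c∣z)] does not in general make the expected KL term E_{z∼μ} KL[q0 ∥ p(·∣z)] equal to zero. -/
/-!
Write `m_c := ∫ p z c ∂μ` for the mean of `p (·) c`. Jensen's inequality for the concave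
logarithm gives `∫ log (p z c) ∂μ ≤ log m_c`, so every term `m_c (log m_c − ∫ log p(z, c) ∂μ)` of
the expected KL divergence is nonnegative, and it vanishes exactly in the equality case of
Jensen, i.e. when `p (·) c` is a.e. constant. Both facts come from integrating the tangent-line
bound `log x − log m ≤ x / m − 1`, which is strict for `x ≠ m`.
-/

open MeasureTheory Real Filter

section Jensen

variable {Z : Type*} [MeasurableSpace Z] {μ : Measure Z} {f : Z → ℝ}

lemma log_sub_log_le_div_sub_one {x m : ℝ} (hx : 0 < x) (hm : 0 < m) :
    log x - log m ≤ x / m - 1 := by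
  rw [← log_div hx.ne' hm.ne']
  exact log_le_sub_one_of_pos (div_pos hx hm)

lemma log_sub_log_lt_div_sub_one {x m : ℝ} (hx : 0 < x) (hm : 0 < m) (hxm : x ≠ m) :
    log x - log m < x / m - 1 := by
  rw [← log_div hx.ne' hm.ne']
  exact log_lt_sub_one_of_pos (div_pos hx hm) fun h => hxm ((div_eq_one_iff_eq hm.ne').1 h)

lemma aestronglyMeasurable_of_log (hf : ∀ᵐ z ∂μ, 0 < f z)
    (hlog : AEStronglyMeasurable (fun z => log (f z)) μ) : AEStronglyMeasurable f μ :=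
  (continuous_exp.comp_aestronglyMeasurable hlog).congr (hf.mono fun _ hz => exp_log hz)

lemma integral_pos_of_ae_pos [NeZero μ] (hf : ∀ᵐ z ∂μ, 0 < f z) (hfi : Integrable f μ) :
    0 < ∫ z, f z ∂μ := by
  refine (integral_pos_iff_support_of_nonneg_ae (hf.mono fun _ hz => hz.le) hfi).2
    (pos_iff_ne_zero.2 fun h => ?_)
  have hzero : ∀ᵐ z ∂μ, f z = 0 := measure_eq_zero_iff_ae_notMem.1 h |>.mono
    fun _ hz => Function.notMem_support.1 hz
  obtain ⟨z, hz, hz'⟩ := (hf.and hzero).exists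
  exact hz.ne' hz'

variable [IsProbabilityMeasure μ]

lemma integral_div_integral_sub_one (hm : ∫ z, f z ∂μ ≠ 0) (hfi : Integrable f μ) :
    ∫ z, (f z / ∫ z, f z ∂μ - 1) ∂μ = 0 := by
  rw [integral_sub (hfi.div_const _) (integrable_const _), integral_div, div_self hm]
  simp

lemma integral_log_sub_log_const (hlog : Integrable (fun z => log (f z)) μ) (m : ℝ) :
    ∫ z, (log (f z) - log m) ∂μ = ∫ z, log (f z) ∂μ - log m := by
  rw [integral_sub hlog (integrable_const _)]
  simp

lemma integral_log_le_log_integral (hf : ∀ᵐ z ∂μ, 0 < f z) (hfi : Integrable f μ)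
    (hlog : Integrable (fun z => log (f z)) μ) :
    ∫ z, log (f z) ∂μ ≤ log (∫ z, f z ∂μ) := by
  set m := ∫ z, f z ∂μ
  have hm : 0 < m := integral_pos_of_ae_pos hf hfi
  have h := calc
    ∫ z, log (f z) ∂μ - log m = ∫ z, (log (f z) - log m) ∂μ :=
      (integral_log_sub_log_const hlog m).symm
    _ ≤ ∫ z, (f z / m - 1) ∂μ := integral_mono_ae (hlog.sub (integrable_const _))
      ((hfi.div_const _).sub (integrable_const _))
      (hf.mono fun _ hz => log_sub_log_le_div_sub_one hz hm)
    _ = 0 := integral_div_integral_sub_one hm.ne' hfi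
  linarith

lemma integral_log_eq_log_integral_iff (hf : ∀ᵐ z ∂μ, 0 < f z) (hfi : Integrable f μ)
    (hlog : Integrable (fun z => log (f z)) μ) :
    ∫ z, log (f z) ∂μ = log (∫ z, f z ∂μ) ↔ ∃ a : ℝ, ∀ᵐ z ∂μ, f z = a := by
  set m := ∫ z, f z ∂μ
  have hm : 0 < m := integral_pos_of_ae_pos hf hfi
  constructor
  · intro heq
    refine ⟨m, ?_⟩
    have hgap : ∫ z, (log (f z) - log m) ∂μ = ∫ z, (f z / m - 1) ∂μ := by
      rw [integral_log_sub_log_const hlog, integral_div_integral_sub_one hm.ne' hfi, heq,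
        sub_self]
    have hae := (integral_eq_iff_of_ae_le (hlog.sub (integrable_const _))
      ((hfi.div_const _).sub (integrable_const _))
      (hf.mono fun _ hz => log_sub_log_le_div_sub_one hz hm)).1 hgap
    filter_upwards [hf, hae] with z hz hz'
    by_contra hne
    exact (log_sub_log_lt_div_sub_one hz hm hne).ne hz'
  · rintro ⟨a, ha⟩
    have hconst : ∀ g : ℝ → ℝ, ∫ z, g (f z) ∂μ = g a := fun g => by
      rw [integral_congr_ae (ha.mono fun _ hz => congrArg g hz)]
      simp
    rw [hconst log, show m = a from hconst id]

lemma integral_mul_log_integral_sub_integral_log_nonneg (hf : ∀ᵐ z ∂μ, 0 < f z)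
    (hfi : Integrable f μ) (hlog : Integrable (fun z => log (f z)) μ) :
    0 ≤ (∫ z, f z ∂μ) * (log (∫ z, f z ∂μ) - ∫ z, log (f z) ∂μ) :=
  mul_nonneg (integral_pos_of_ae_pos hf hfi).le
    (sub_nonneg.2 (integral_log_le_log_integral hf hfi hlog))

lemma integral_mul_log_integral_sub_integral_log_eq_zero_iff (hf : ∀ᵐ z ∂μ, 0 < f z)
    (hfi : Integrable f μ) (hlog : Integrable (fun z => log (f z)) μ) :
    (∫ z, f z ∂μ) * (log (∫ z, f z ∂μ) - ∫ z, log (f z) ∂μ) = 0 ↔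
      ∃ a : ℝ, ∀ᵐ z ∂μ, f z = a := by
  rw [← integral_log_eq_log_integral_iff hf hfi hlog, mul_eq_zero,
    or_iff_right (integral_pos_of_ae_pos hf hfi).ne', sub_eq_zero, eq_comm]

end Jensen

section ExpectedKL

variable {Z : Type*} [MeasurableSpace Z] {μ : Measure Z} {C : Type*} [Fintype C]
  {p : Z → C → ℝ}

/-- The objective `F(q)`; the convention that terms with `q c = 0` contribute `0` holds
automatically, as `0 * _ = 0`. -/
noncomputable def expectedKL (μ : Measure Z) (p : Z → C → ℝ) (q : C → ℝ) : ℝ :=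
  ∫ z, ∑ c, q c * (log (q c) - log (p z c)) ∂μ

lemma integrable_apply_of_sum_eq_one [IsFiniteMeasure μ] (hnn : ∀ z c, 0 ≤ p z c)
    (hsum : ∀ z, ∑ c, p z c = 1) {c : C} (hm : AEStronglyMeasurable (fun z => p z c) μ) :
    Integrable (fun z => p z c) μ := by
  refine Integrable.mono' (integrable_const 1) hm (Eventually.of_forall fun z => ?_)
  rw [norm_of_nonneg (hnn z c), ← hsum z]
  exact Finset.single_le_sum (fun c' _ => hnn z c') (Finset.mem_univ c)

lemma sum_integral_apply_eq_one [IsProbabilityMeasure μ] (hsum : ∀ z, ∑ c, p z c = 1)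
    (hp : ∀ c, Integrable (fun z => p z c) μ) :
    ∑ c, ∫ z, p z c ∂μ = 1 := by
  rw [← integral_finsetSum _ fun c _ => hp c]
  simp [hsum]

variable [IsProbabilityMeasure μ]

lemma expectedKL_eq_sum (hlog : ∀ c, Integrable (fun z => log (p z c)) μ) (q : C → ℝ) :
    expectedKL μ p q = ∑ c, q c * (log (q c) - ∫ z, log (p z c) ∂μ) := by
  have hterm : ∀ c, Integrable (fun z => q c * (log (q c) - log (p z c))) μ := fun c =>
    ((integrable_const _).sub (hlog c)).const_mul _
  rw [expectedKL, integral_finsetSum _ fun c _ => hterm c]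
  refine Finset.sum_congr rfl fun c _ => ?_
  rw [integral_const_mul, integral_sub (integrable_const _) (hlog c)]
  simp

lemma expectedKL_mean_nonneg (hpos : ∀ z c, 0 < p z c)
    (hp : ∀ c, Integrable (fun z => p z c) μ) (hlog : ∀ c, Integrable (fun z => log (p z c)) μ) :
    0 ≤ expectedKL μ p fun c => ∫ z, p z c ∂μ := by
  rw [expectedKL_eq_sum hlog]
  exact Finset.sum_nonneg fun c _ =>
    integral_mul_log_integral_sub_integral_log_nonneg (ae_of_all _ (hpos · c)) (hp c) (hlog c)

lemma expectedKL_mean_eq_zero_iff (hpos : ∀ z c, 0 < p z c)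
    (hp : ∀ c, Integrable (fun z => p z c) μ) (hlog : ∀ c, Integrable (fun z => log (p z c)) μ) :
    expectedKL μ p (fun c => ∫ z, p z c ∂μ) = 0 ↔ ∀ c, ∃ a : ℝ, ∀ᵐ z ∂μ, p z c = a := by
  rw [expectedKL_eq_sum hlog, Finset.sum_eq_zero_iff_of_nonneg fun c _ =>
    integral_mul_log_integral_sub_integral_log_nonneg (ae_of_all _ (hpos · c)) (hp c) (hlog c)]
  simp only [Finset.mem_univ, forall_const]
  exact forall_congr' fun c => integral_mul_log_integral_sub_integral_log_eq_zero_iff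
    (ae_of_all _ (hpos · c)) (hp c) (hlog c)

end ExpectedKL

theorem vade_misapprehension_correction_general
    {Z : Type*} [MeasurableSpace Z] (μ : Measure Z) [IsProbabilityMeasure μ]
    {C : Type*} [Fintype C]
    (p : Z → C → ℝ)
    (hpos : ∀ z c, 0 < p z c)
    (hsum : ∀ z, ∑ c, p z c = 1)
    (hint : ∀ c, Integrable (fun z => Real.log (p z c)) μ)
    (q0 : C → ℝ) (hq0def : ∀ c, q0 c = ∫ z, p z c ∂μ) :
    ((∀ c, 0 ≤ q0 c) ∧ ∑ c, q0 c = 1)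
    ∧ (∫ z, ∑ c, q0 c * (Real.log (q0 c) - Real.log (p z c)) ∂μ
        = ∑ c, q0 c * (Real.log (q0 c) - ∫ z, Real.log (p z c) ∂μ))
    ∧ (0 ≤ ∫ z, ∑ c, q0 c * (Real.log (q0 c) - Real.log (p z c)) ∂μ)
    ∧ ((∫ z, ∑ c, q0 c * (Real.log (q0 c) - Real.log (p z c)) ∂μ = 0)
        ↔ ∀ c, ∃ a : ℝ, ∀ᵐ z ∂μ, p z c = a) := by
  obtain rfl : q0 = fun c => ∫ z, p z c ∂μ := funext hq0def
  have hp : ∀ c, Integrable (fun z => p z c) μ := fun c =>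
    integrable_apply_of_sum_eq_one (fun z c => (hpos z c).le) hsum
      (aestronglyMeasurable_of_log (ae_of_all _ (hpos · c)) (hint c).1)
  exact ⟨⟨fun c => integral_nonneg (hpos · c |>.le), sum_integral_apply_eq_one hsum hp⟩,
    expectedKL_eq_sum hint _, expectedKL_mean_nonneg hpos hp hint,
    expectedKL_mean_eq_zero_iff hpos hp hint⟩

/-- Correction of VaDE's misapprehension: `q0 c := ∫ p z c ∂μ` is a pmf,
`F(q0) = Σ_c q0 c (log (q0 c) − ∫ log (p z c) ∂μ)`, `F(q0) ≥ 0`, and `F(q0) = 0`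
iff each `p (·) c` is `μ`-a.e. constant. -/
theorem vade_misapprehension_correction
    {Z : Type*} [MeasurableSpace Z] (μ : Measure Z) [IsProbabilityMeasure μ]
    {C : Type*} [Fintype C] [Nonempty C]
    (p : Z → C → ℝ)
    (hpos : ∀ z c, 0 < p z c)
    (hsum : ∀ z, ∑ c, p z c = 1)
    (hmeas : ∀ c, Measurable fun z => Real.log (p z c))
    (hint : ∀ c, Integrable (fun z => Real.log (p z c)) μ)
    (q0 : C → ℝ) (hq0def : ∀ c, q0 c = ∫ z, p z c ∂μ) :
    ((∀ c, 0 ≤ q0 c) ∧ ∑ c, q0 c = 1)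
    ∧ (∫ z, ∑ c, q0 c * (Real.log (q0 c) - Real.log (p z c)) ∂μ
        = ∑ c, q0 c * (Real.log (q0 c) - ∫ z, Real.log (p z c) ∂μ))
    ∧ (0 ≤ ∫ z, ∑ c, q0 c * (Real.log (q0 c) - Real.log (p z c)) ∂μ)
    ∧ ((∫ z, ∑ c, q0 c * (Real.log (q0 c) - Real.log (p z c)) ∂μ = 0)
        ↔ ∀ c, ∃ a : ℝ, ∀ᵐ z ∂μ, p z c = a) :=
  vade_misapprehension_correction_general μ p hpos hsum hint q0 hq0def
end
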